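/- Let K be any field. Under the natural action of the Schur algebra S_K(2m,n) on V^{⊗n}, the subalgebra S_K^s(m,n) is mapped isomorphically onto End_{B_n(−2m)}(V^{⊗n}), the algebra of all K-linear endomorphisms of V^{⊗n} commuting with the right action of the Brauer algebra B_n(−2m). -/

import Mathlib

open scoped BigOperators Classical
open MulOpposite

noncomputable section

namespace SpBrauer

/-- the conjugate index `i' = 2m-1-i` (0-based version of `2m+1-i`). -/
def conjIdx (m : ℕ) (i : Fin (2*m)) : Fin (2*m) :=
  ⟨2*m - 1 - (i : ℕ), by have := i.isLt; omega⟩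

/-- the sign `ε_{ij}`. -/
def epsZ (m : ℕ) (i j : Fin (2*m)) : ℤ :=
  if (i : ℕ) + (j : ℕ) + 1 = 2*m then (if (i : ℕ) < (j : ℕ) then 1 else -1) else 0

/-- tensor space `V^{⊗ n}` modelled as the free module on multi-indices. -/
abbrev Ten (R : Type) (m n : ℕ) : Type := (Fin n → Fin (2*m)) → R

/-- basis tensor `v_{i_1} ⊗ ⋯ ⊗ v_{i_n}`. -/
def dta (R : Type) [CommRing R] (m n : ℕ) (i : Fin n → Fin (2*m)) : Ten R m n :=
  fun a => if a = i then 1 else 0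

/-- the linear map on free modules with "matrix" `M`. -/
def funMap (R : Type) [CommRing R] (α β : Type) [Fintype α]
    (M : β → α → R) : (α → R) →ₗ[R] (β → R) where
  toFun f := fun b => ∑ a, M b a * f a
  map_add' f g := by
    funext b
    simp [Pi.add_apply, mul_add, Finset.sum_add_distrib]
  map_smul' c f := by
    funext b
    simp only [Pi.smul_apply, smul_eq_mul, RingHom.id_apply]
    rw [Finset.mul_sum]
    exact Finset.sum_congr rfl (fun a _ => by ring)

/-- the operator given by the right action of the Brauer algebra generator `s_j`
(`j` is 0-based: `s_j` swaps positions `j` and `j+1` with a sign). -/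
def sOp (R : Type) [CommRing R] (m n : ℕ) (j : Fin (n-1)) :
    Ten R m n →ₗ[R] Ten R m n :=
  funMap R _ _ (fun a b =>
    if b = a ∘ (Equiv.swap (⟨(j:ℕ), by have := j.isLt; omega⟩ : Fin n)
        (⟨(j:ℕ)+1, by have := j.isLt; omega⟩ : Fin n)) then -1 else 0)

/-- the operator given by the right action of the Brauer algebra generator `e_j`. -/
def eOp (R : Type) [CommRing R] (m n : ℕ) (j : Fin (n-1)) :
    Ten R m n →ₗ[R] Ten R m n :=
  funMap R _ _ (fun a b =>
    (if ∀ p : Fin n, p ≠ (⟨(j:ℕ), by have := j.isLt; omega⟩ : Fin n) →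
        p ≠ (⟨(j:ℕ)+1, by have := j.isLt; omega⟩ : Fin n) → b p = a p then 1 else 0) *
    (-((epsZ m (a ⟨(j:ℕ), by have := j.isLt; omega⟩) (a ⟨(j:ℕ)+1, by have := j.isLt; omega⟩) : ℤ) : R)) *
    ((epsZ m (b ⟨(j:ℕ), by have := j.isLt; omega⟩) (b ⟨(j:ℕ)+1, by have := j.isLt; omega⟩) : ℤ) : R))

/-- the (sign-twisted) right place-permutation action of a permutation on tensor space. -/
def permOp (R : Type) [CommRing R] (m n : ℕ) (π : Equiv.Perm (Fin n)) :
    Ten R m n →ₗ[R] Ten R m n :=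
  funMap R _ _ (fun a b => if b = a ∘ π then ((Equiv.Perm.sign π : ℤ) : R) else 0)

/-- the `n`-fold tensor power of (the endomorphism of `V` given by) a matrix `g`,
acting diagonally on tensor space. -/
def tenOp (R : Type) [CommRing R] (m n : ℕ) (g : Matrix (Fin (2*m)) (Fin (2*m)) R) :
    Ten R m n →ₗ[R] Ten R m n :=
  funMap R _ _ (fun a b => ∏ k : Fin n, g (a k) (b k))

/-- the skew-symmetric bilinear form `(v,w)` determined by `(v_i, v_j) = ε_{ij}`. -/
def sform (R : Type) [CommRing R] (m : ℕ) (v w : Fin (2*m) → R) : R :=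
  ∑ i, ∑ j, v i * ((epsZ m i j : ℤ) : R) * w j

/-- membership in the symplectic group `Sp(V)` (an invertible linear map preserving the form). -/
def IsSymp (R : Type) [CommRing R] (m : ℕ) (g : Matrix (Fin (2*m)) (Fin (2*m)) R) : Prop :=
  IsUnit g.det ∧ ∀ v w, sform R m (g.mulVec v) (g.mulVec w) = sform R m v w

/-- membership in the symplectic similitude group `GSp(V)`. -/
def IsGSymp (R : Type) [CommRing R] (m : ℕ) (g : Matrix (Fin (2*m)) (Fin (2*m)) R) : Prop :=
  IsUnit g.det ∧ ∃ d : R, d ≠ 0 ∧ ∀ v w, sform R m (g.mulVec v) (g.mulVec w) = d * sform R m v w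

/-! ### The Brauer algebra, by generators and relations -/

/-- generators of the Brauer algebra `B_n(x)`:  `s i` and `e i` for `i = 0, …, n-2`
(0-based versions of `s_1, …, s_{n-1}`, `e_1, …, e_{n-1}`). -/
inductive BGen (n : ℕ) : Type
  | s : Fin (n-1) → BGen n
  | e : Fin (n-1) → BGen n

/-- the defining relations of the Brauer algebra `B_n(x)`. -/
inductive BRel (R : Type) [CommRing R] (x : R) (n : ℕ) :
    FreeAlgebra R (BGen n) → FreeAlgebra R (BGen n) → Prop
  | ss (i : Fin (n-1)) :
      BRel R x n (FreeAlgebra.ι R (BGen.s i) * FreeAlgebra.ι R (BGen.s i)) 1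
  | ee (i : Fin (n-1)) :
      BRel R x n (FreeAlgebra.ι R (BGen.e i) * FreeAlgebra.ι R (BGen.e i))
        (x • FreeAlgebra.ι R (BGen.e i))
  | es (i : Fin (n-1)) :
      BRel R x n (FreeAlgebra.ι R (BGen.e i) * FreeAlgebra.ι R (BGen.s i))
        (FreeAlgebra.ι R (BGen.e i))
  | se (i : Fin (n-1)) :
      BRel R x n (FreeAlgebra.ι R (BGen.s i) * FreeAlgebra.ι R (BGen.e i))
        (FreeAlgebra.ι R (BGen.e i))
  | ssComm (i j : Fin (n-1)) (h : (i:ℕ)+1 < (j:ℕ)) :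
      BRel R x n (FreeAlgebra.ι R (BGen.s i) * FreeAlgebra.ι R (BGen.s j))
        (FreeAlgebra.ι R (BGen.s j) * FreeAlgebra.ι R (BGen.s i))
  | seComm (i j : Fin (n-1)) (h : (i:ℕ)+1 < (j:ℕ)) :
      BRel R x n (FreeAlgebra.ι R (BGen.s i) * FreeAlgebra.ι R (BGen.e j))
        (FreeAlgebra.ι R (BGen.e j) * FreeAlgebra.ι R (BGen.s i))
  | eeComm (i j : Fin (n-1)) (h : (i:ℕ)+1 < (j:ℕ)) :
      BRel R x n (FreeAlgebra.ι R (BGen.e i) * FreeAlgebra.ι R (BGen.e j))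
        (FreeAlgebra.ι R (BGen.e j) * FreeAlgebra.ι R (BGen.e i))
  | braid (i j : Fin (n-1)) (h : (j:ℕ) = (i:ℕ)+1) :
      BRel R x n
        (FreeAlgebra.ι R (BGen.s i) * FreeAlgebra.ι R (BGen.s j) * FreeAlgebra.ι R (BGen.s i))
        (FreeAlgebra.ι R (BGen.s j) * FreeAlgebra.ι R (BGen.s i) * FreeAlgebra.ι R (BGen.s j))
  | eje (i j : Fin (n-1)) (h : (j:ℕ) = (i:ℕ)+1) :
      BRel R x n
        (FreeAlgebra.ι R (BGen.e i) * FreeAlgebra.ι R (BGen.e j) * FreeAlgebra.ι R (BGen.e i))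
        (FreeAlgebra.ι R (BGen.e i))
  | eje' (i j : Fin (n-1)) (h : (j:ℕ) = (i:ℕ)+1) :
      BRel R x n
        (FreeAlgebra.ι R (BGen.e j) * FreeAlgebra.ι R (BGen.e i) * FreeAlgebra.ι R (BGen.e j))
        (FreeAlgebra.ι R (BGen.e j))
  | see (i j : Fin (n-1)) (h : (j:ℕ) = (i:ℕ)+1) :
      BRel R x n
        (FreeAlgebra.ι R (BGen.s i) * FreeAlgebra.ι R (BGen.e j) * FreeAlgebra.ι R (BGen.e i))
        (FreeAlgebra.ι R (BGen.s j) * FreeAlgebra.ι R (BGen.e i))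
  | ees (i j : Fin (n-1)) (h : (j:ℕ) = (i:ℕ)+1) :
      BRel R x n
        (FreeAlgebra.ι R (BGen.e j) * FreeAlgebra.ι R (BGen.e i) * FreeAlgebra.ι R (BGen.s j))
        (FreeAlgebra.ι R (BGen.e j) * FreeAlgebra.ι R (BGen.s i))

/-- the Brauer algebra `B_n(x)` over `R`, presented by generators and relations. -/
abbrev BrauerAlg (R : Type) [CommRing R] (x : R) (n : ℕ) : Type := RingQuot (BRel R x n)

/-- the generator `s_i` of the Brauer algebra (0-based index). -/
def bS (R : Type) [CommRing R] (x : R) (n : ℕ) (i : Fin (n-1)) : BrauerAlg R x n :=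
  RingQuot.mkAlgHom R (BRel R x n) (FreeAlgebra.ι R (BGen.s i))

/-- the generator `e_i` of the Brauer algebra (0-based index). -/
def bE (R : Type) [CommRing R] (x : R) (n : ℕ) (i : Fin (n-1)) : BrauerAlg R x n :=
  RingQuot.mkAlgHom R (BRel R x n) (FreeAlgebra.ι R (BGen.e i))

/-- the element `E_f = e_1 e_3 ⋯ e_{2f-1}` of the Brauer algebra. -/
def EfB (R : Type) [CommRing R] (x : R) (n f : ℕ) (hf : 2*f ≤ n) : BrauerAlg R x n :=
  (List.ofFn (fun i : Fin f => bE R x n ⟨2*(i:ℕ), by have := i.isLt; omega⟩)).prod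

/-- the two-sided ideal `B^{(f)}` of the Brauer algebra generated by `E_f`
(it is `0` when `2f > n`, matching the convention of the paper). -/
def Bideal (R : Type) [CommRing R] (x : R) (n f : ℕ) : Submodule R (BrauerAlg R x n) :=
  Submodule.span R {y | ∃ (hf : 2*f ≤ n) (a b : BrauerAlg R x n), y = a * EfB R x n f hf * b}

/-- the operator on tensor space given by the right action of `E_f = e_1e_3⋯e_{2f-1}`. -/
def EfOp (R : Type) [CommRing R] (m n f : ℕ) (hf : 2*f ≤ n) :
    Module.End R (Ten R m n) :=
  (List.ofFn (fun i : Fin f => eOp R m n ⟨2*(i:ℕ), by have := i.isLt; omega⟩)).prod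

/-! ### Combinatorial predicates -/

/-- `σ ∈ S_{{2f+1, …, n}}`, i.e. `σ` fixes `1, …, 2f` pointwise (0-based). -/
def FixLow (n f : ℕ) (σ : Equiv.Perm (Fin n)) : Prop :=
  ∀ a : Fin n, (a:ℕ) < 2*f → σ a = a

/-- `σ ∈ S_{2f} = S_{{1, …, 2f}}`, i.e. `σ` fixes `2f+1, …, n` pointwise (0-based). -/
def FixHigh (n f : ℕ) (σ : Equiv.Perm (Fin n)) : Prop :=
  ∀ a : Fin n, 2*f ≤ (a:ℕ) → σ a = a

/-- membership in `D_{ν_f}`:  the bitableau `t^{ν_f}·d` is row standard and the first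
column of its first component is increasing (everything 0-based; `d a` is the entry
at the cell of `t^{ν_f}` containing `a`). -/
def DnuP (n f : ℕ) (d : Equiv.Perm (Fin n)) : Prop :=
  (∀ a b : Fin n, (a:ℕ) % 2 = 0 → (b:ℕ) = (a:ℕ)+1 → (b:ℕ) < 2*f → d a < d b) ∧
  (∀ a b : Fin n, (a:ℕ) % 2 = 0 → (b:ℕ) % 2 = 0 → (a:ℕ) < (b:ℕ) → (b:ℕ) < 2*f → d a < d b) ∧
  (∀ a b : Fin n, 2*f ≤ (a:ℕ) → (b:ℕ) = (a:ℕ)+1 → d a < d b)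

/-- membership in `D_f = D_{ν_f} ∩ S_{2f}`. -/
def DfP (n f : ℕ) (d : Equiv.Perm (Fin n)) : Prop :=
  DnuP n f d ∧ FixHigh n f d

/-- membership in the row stabilizer `S_{(2^f)}` of the initial `(2^f)`-tableau
(whose rows are `{1,2}, {3,4}, …, {2f-1,2f}`), inside `S_{2f} ≤ S_n`. -/
def RowStabP (n f : ℕ) (w : Equiv.Perm (Fin n)) : Prop :=
  FixHigh n f w ∧ ∀ a : Fin n, ((w a : ℕ))/2 = (a:ℕ)/2

/-- membership in `Ψ`, the normalizer of `S_{(2^f)}` in `S_{2f}`. -/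
def PsiP (n f : ℕ) (z : Equiv.Perm (Fin n)) : Prop :=
  FixHigh n f z ∧ ∀ w, RowStabP n f w ↔ RowStabP n f (z * w * z⁻¹)

/-- `d_J` for a `2f`-element subset `J ⊆ {1, …, n}`:  the unique permutation
enumerating `J` increasingly on the first `2f` positions and the complement of `J`
increasingly on the remaining positions. -/
def IsdJ (n f : ℕ) (J : Finset (Fin n)) (d : Equiv.Perm (Fin n)) : Prop :=
  (∀ a : Fin n, ((a:ℕ) < 2*f → d a ∈ J) ∧ (2*f ≤ (a:ℕ) → d a ∉ J)) ∧
  (∀ a b : Fin n, (a:ℕ) < (b:ℕ) → (b:ℕ) < 2*f → d a < d b) ∧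
  (∀ a b : Fin n, 2*f ≤ (a:ℕ) → (a:ℕ) < (b:ℕ) → d a < d b)

/-- membership in `S_{(2f, n-2f)} = S_{{1,…,2f}} × S_{{2f+1,…,n}}`. -/
def BlockP (n f : ℕ) (d : Equiv.Perm (Fin n)) : Prop :=
  ∀ a : Fin n, (a:ℕ) < 2*f ↔ ((d a : ℕ)) < 2*f

/-- the multi-index `c = (1, 1', 2, 2', …, f, f')`, completed by an
arbitrary multi-index `kk` on the positions `> 2f`. -/
def cIdx (m n f : ℕ) (hfm : f ≤ m) (kk : Fin n → Fin (2*m)) : Fin n → Fin (2*m) :=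
  fun p => if h : (p:ℕ) < 2*f then
    (if (p:ℕ) % 2 = 0 then (⟨(p:ℕ)/2, by omega⟩ : Fin (2*m))
     else conjIdx m ⟨(p:ℕ)/2, by omega⟩)
  else kk p

/-- the multi-index `ĉ = (f+1, (f+1)', …, 2f, (2f)') ∈ I(2m, 2f)`. -/
def cHatIdx (m f : ℕ) (hfm : 2*f ≤ m) : Fin (2*f) → Fin (2*m) :=
  fun p => if (p:ℕ) % 2 = 0 then (⟨f + (p:ℕ)/2, by have := p.isLt; omega⟩ : Fin (2*m))
           else conjIdx m ⟨f + (p:ℕ)/2, by have := p.isLt; omega⟩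

/-- membership in `I_f` (only the values at positions `> 2f` matter):
`2f+1 ≤ kk p ≤ m` (1-based) for all positions `p > 2f`. -/
def IfP (m n f : ℕ) (kk : Fin n → Fin (2*m)) : Prop :=
  ∀ p : Fin n, 2*f ≤ (p:ℕ) → 2*f ≤ ((kk p : ℕ)) ∧ ((kk p : ℕ)) < m

/-- the weight of a multi-index. -/
def wtOf (m k : ℕ) (a : Fin k → Fin (2*m)) : Fin (2*m) → ℕ :=
  fun j => (Finset.univ.filter (fun p => a p = j)).card

/-- the weight-`μ` component of an element of tensor space. -/
def wcomp (R : Type) [CommRing R] (m k : ℕ) (μ : Fin (2*m) → ℕ) (w : Ten R m k) :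
    Ten R m k :=
  fun a => if wtOf m k a = μ then w a else 0

/-- partial sums of a partition. -/
def psum (l : ℕ → ℕ) (r : ℕ) : ℕ := ∑ i ∈ Finset.range r, l i

/-- `l` represents a partition of `n - 2f` (parts listed weakly decreasingly). -/
def PartP (n f : ℕ) (l : ℕ → ℕ) : Prop :=
  (∀ i, l (i+1) ≤ l i) ∧ psum l n = n - 2*f ∧ ∀ i, n ≤ i → l i = 0

/-- membership in the Young subgroup `S_λ ≤ S_{{2f+1, …, n}}` stabilizing the rows of
the initial `λ`-tableau `t^λ` (with entries `2f+1, …, n`). -/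
def InSlam (n f : ℕ) (l : ℕ → ℕ) (w : Equiv.Perm (Fin n)) : Prop :=
  (∀ a : Fin n, (a:ℕ) < 2*f → w a = a) ∧
  (∀ (a : Fin n) (r : ℕ), 2*f + psum l r ≤ (a:ℕ) → (a:ℕ) < 2*f + psum l (r+1) →
     2*f + psum l r ≤ ((w a : ℕ)) ∧ ((w a : ℕ)) < 2*f + psum l (r+1))

/-- `d = d(t)` for a standard `λ`-tableau `t` with entries `2f+1, …, n`, i.e.
`d ∈ S_{{2f+1,…,n}}` and `t^λ · d` is standard. -/
def StdP (n f : ℕ) (l : ℕ → ℕ) (d : Equiv.Perm (Fin n)) : Prop :=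
  FixLow n f d ∧
  (∀ (a b : Fin n) (r c : ℕ), (a:ℕ) = 2*f + psum l r + c → c+1 < l r →
     (b:ℕ) = (a:ℕ)+1 → d a < d b) ∧
  (∀ (a b : Fin n) (r c : ℕ), (a:ℕ) = 2*f + psum l r + c → c < l (r+1) →
     (b:ℕ) = 2*f + psum l (r+1) + c → d a < d b)

/-- the embedding of the index set of the basis of `V` into that of `Ṽ`
(`v_i ↦ ṽ_i`, `v_{i'} ↦ ṽ_{i'}`). -/
def embIdx (m m0 : ℕ) (h : m ≤ m0) : Fin (2*m) → Fin (2*m0) :=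
  fun j => if (j:ℕ) < m then ⟨(j:ℕ), by have := j.isLt; omega⟩
           else ⟨(j:ℕ) + 2*(m0 - m), by have := j.isLt; omega⟩

/-- the inclusion `V^{⊗n} ↪ Ṽ^{⊗n}`. -/
def inclT (R : Type) [CommRing R] (m m0 n : ℕ) (h : m ≤ m0) :
    Ten R m n →ₗ[R] Ten R m0 n :=
  funMap R _ _ (fun (b : Fin n → Fin (2*m0)) (a : Fin n → Fin (2*m)) =>
    if b = embIdx m m0 h ∘ a then 1 else 0)

/-- the projection `π_K : Ṽ^{⊗n} ↠ V^{⊗n}` killing all basis tensors containing a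
factor `ṽ_i` or `ṽ_{i'}` with `m+1 ≤ i ≤ m_0`. -/
def projT (R : Type) [CommRing R] (m m0 n : ℕ) (h : m ≤ m0) :
    Ten R m0 n →ₗ[R] Ten R m n :=
  funMap R _ _ (fun (a : Fin n → Fin (2*m)) (b : Fin n → Fin (2*m0)) =>
    if b = embIdx m m0 h ∘ a then 1 else 0)


/-- replace the values of a multi-index at the two positions `p`, `q` by `x`, `y`. -/
def set2 (m n : ℕ) (p q : Fin n) (x y : Fin (2*m)) (t : Fin n → Fin (2*m)) :
    Fin n → Fin (2*m) :=
  fun r => if r = p then x else if r = q then y else t r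

/-! An endomorphism of tensor space is `funMap` of its coefficient matrix `c`. Commuting with the
signed swap `s_j` says exactly that `c` is invariant under the transposition `(j j+1)`; these
generate `S_n`, so this is place-permutation invariance. Commuting with `e_j` is the identity
`ContractionCompatible c j (j+1)`, which permutation invariance moves to the positions `1, 2`.
There it splits according to whether the fixed multi-indices `b` and `u` carry a pair `(k, k')`
in those positions: if one of them does not, it is one of the two vanishing conditions; if both
do, it is the balance condition, after the swap of the pair has absorbed the signs `ε`. -/

section Indices

variable {m : ℕ}

lemma conjIdx_conjIdx (i : Fin (2*m)) : conjIdx m (conjIdx m i) = i := by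
  have := i.isLt
  ext
  simp only [conjIdx]
  omega

lemma epsZ_eq_zero_of_ne_conjIdx {i j : Fin (2*m)} (h : j ≠ conjIdx m i) : epsZ m i j = 0 := by
  have := i.isLt
  rw [epsZ, if_neg]
  exact fun hij => h (Fin.ext (by simp only [conjIdx]; omega))

lemma epsZ_conjIdx (i : Fin (2*m)) :
    epsZ m i (conjIdx m i) = if (i:ℕ) < m then 1 else -1 := by
  have := i.isLt
  simp only [epsZ, conjIdx]
  split_ifs <;> omega

lemma epsZ_antisymm (i j : Fin (2*m)) : epsZ m j i = -epsZ m i j := by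
  simp only [epsZ]
  split_ifs <;> omega

lemma eq_conjIdx_comm {i j : Fin (2*m)} : i = conjIdx m j ↔ j = conjIdx m i :=
  ⟨fun h => by rw [h, conjIdx_conjIdx], fun h => by rw [h, conjIdx_conjIdx]⟩

lemma forall_of_forall_lt_of_conjIdx {P : Fin (2*m) → Prop}
    (hconj : ∀ i, P (conjIdx m i) → P i)
    (hlt : ∀ i : Fin (2*m), (i:ℕ) < m → P i) (i : Fin (2*m)) : P i := by
  by_cases hi : (i:ℕ) < m
  · exact hlt i hi
  · exact hconj i (hlt _ (by simp only [conjIdx]; omega))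

lemma epsZ_conjIdx_mul_self (R : Type) [CommRing R] (i : Fin (2*m)) :
    ((epsZ m i (conjIdx m i) : ℤ) : R) * (epsZ m i (conjIdx m i) : ℤ) = 1 := by
  rw [epsZ_conjIdx]
  split_ifs <;> simp

end Indices

section Set2

variable {m n : ℕ} {p q : Fin n}

@[simp]
lemma set2_apply_left (x y : Fin (2*m)) (t : Fin n → Fin (2*m)) :
    set2 m n p q x y t p = x := by
  simp [set2]

lemma set2_apply_right (hpq : p ≠ q) (x y : Fin (2*m)) (t : Fin n → Fin (2*m)) :
    set2 m n p q x y t q = y := by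
  simp [set2, hpq.symm]

lemma set2_apply_of_ne {r : Fin n} (hp : r ≠ p) (hq : r ≠ q) (x y : Fin (2*m))
    (t : Fin n → Fin (2*m)) : set2 m n p q x y t r = t r := by
  simp [set2, hp, hq]

@[simp]
lemma set2_set2 (x y x' y' : Fin (2*m)) (t : Fin n → Fin (2*m)) :
    set2 m n p q x y (set2 m n p q x' y' t) = set2 m n p q x y t := by
  funext r
  unfold set2
  split_ifs <;> rfl

lemma set2_self (t : Fin n → Fin (2*m)) : set2 m n p q (t p) (t q) t = t := by
  funext r
  unfold set2
  split_ifs with hp hq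
  · rw [hp]
  · rw [hq]
  · rfl

lemma set2_comp_perm (σ : Equiv.Perm (Fin n)) (x y : Fin (2*m)) (t : Fin n → Fin (2*m)) :
    set2 m n (σ p) (σ q) x y t ∘ σ = set2 m n p q x y (t ∘ σ) := by
  funext r
  simp only [set2, Function.comp_apply, σ.injective.eq_iff]

lemma set2_comp_swap (hpq : p ≠ q) (x y : Fin (2*m)) (t : Fin n → Fin (2*m)) :
    set2 m n p q x y t ∘ Equiv.swap p q = set2 m n p q y x t := by
  funext r
  simp only [set2, Function.comp_apply, Equiv.swap_apply_def]
  split_ifs <;> simp_all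

end Set2

/-- Contraction of `g` against `∑ₖ ε_{k k'} vₖ ⊗ v_{k'}` placed in positions `p`, `q`. -/
def contract (R : Type) [CommRing R] (m n : ℕ) (p q : Fin n)
    (g : (Fin n → Fin (2*m)) → R) (t : Fin n → Fin (2*m)) : R :=
  ∑ k, ((epsZ m k (conjIdx m k) : ℤ) : R) * g (set2 m n p q k (conjIdx m k) t)

section Contract

variable {R : Type} [CommRing R] {m n : ℕ} {p q : Fin n}

@[simp]
lemma contract_set2 (g : (Fin n → Fin (2*m)) → R) (x y : Fin (2*m)) (t : Fin n → Fin (2*m)) :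
    contract R m n p q g (set2 m n p q x y t) = contract R m n p q g t := by
  simp only [contract, set2_set2]

lemma sum_epsZ_mul_sub_eq_zero_iff (c : (Fin n → Fin (2*m)) → (Fin n → Fin (2*m)) → R)
    (i j : Fin (2*m)) (t w : Fin n → Fin (2*m)) :
    ∑ k, ((epsZ m k (conjIdx m k) : ℤ) : R) *
        (c (set2 m n p q i (conjIdx m i) t) (set2 m n p q k (conjIdx m k) w) -
          c (set2 m n p q k (conjIdx m k) t) (set2 m n p q j (conjIdx m j) w)) = 0 ↔
      contract R m n p q (c (set2 m n p q i (conjIdx m i) t)) w =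
        contract R m n p q (fun a => c a (set2 m n p q j (conjIdx m j) w)) t := by
  simp only [contract, mul_sub, Finset.sum_sub_distrib, sub_eq_zero]

lemma contract_eq_sum_sum (g : (Fin n → Fin (2*m)) → R) (t : Fin n → Fin (2*m)) :
    contract R m n p q g t = ∑ x, ∑ y, ((epsZ m x y : ℤ) : R) * g (set2 m n p q x y t) := by
  refine Finset.sum_congr rfl fun x _ => ?_
  rw [Finset.sum_eq_single (conjIdx m x) (fun y _ hy => by simp [epsZ_eq_zero_of_ne_conjIdx hy])
    (absurd (Finset.mem_univ _))]

lemma sum_agree_eq_contract (hpq : p ≠ q) (g : (Fin n → Fin (2*m)) → R)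
    (t : Fin n → Fin (2*m)) :
    ∑ a, (if ∀ r, r ≠ p → r ≠ q → a r = t r then ((epsZ m (a p) (a q) : ℤ) : R) * g a
      else 0) = contract R m n p q g t := by
  have himage :
      Finset.univ.filter (fun a : Fin n → Fin (2*m) => ∀ r, r ≠ p → r ≠ q → a r = t r) =
        Finset.univ.image (fun xy : Fin (2*m) × Fin (2*m) => set2 m n p q xy.1 xy.2 t) := by
    ext a
    simp only [Finset.mem_filter, Finset.mem_univ, true_and, Finset.mem_image, Prod.exists]
    constructor
    · intro ha
      refine ⟨a p, a q, funext fun r => ?_⟩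
      by_cases hp : r = p
      · subst hp; simp
      by_cases hq : r = q
      · subst hq; simp [set2_apply_right hpq]
      rw [set2_apply_of_ne hp hq, ha r hp hq]
    · rintro ⟨x, y, rfl⟩ r hp hq
      exact set2_apply_of_ne hp hq x y t
  have hinj : Function.Injective (fun xy : Fin (2*m) × Fin (2*m) => set2 m n p q xy.1 xy.2 t) :=
    fun xy xy' h => Prod.ext (by simpa using congrFun h p)
      (by simpa [set2_apply_right hpq] using congrFun h q)
  rw [← Finset.sum_filter, himage, Finset.sum_image fun xy _ xy' _ h => hinj h,
    Fintype.sum_prod_type, contract_eq_sum_sum]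
  simp only [set2_apply_left, set2_apply_right hpq]

lemma contract_comp_swap (hpq : p ≠ q) (g : (Fin n → Fin (2*m)) → R)
    (t : Fin n → Fin (2*m)) :
    contract R m n p q (fun a => g (a ∘ Equiv.swap p q)) t = -contract R m n p q g t := by
  simp only [contract, set2_comp_swap hpq, ← Finset.sum_neg_distrib]
  refine Fintype.sum_equiv ⟨conjIdx m, conjIdx m, conjIdx_conjIdx, conjIdx_conjIdx⟩ _ _
    fun k => ?_
  simp only [Equiv.coe_fn_mk, conjIdx_conjIdx, epsZ_antisymm k, Int.cast_neg, neg_mul, neg_neg]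

lemma contract_comp_perm (σ : Equiv.Perm (Fin n)) (g : (Fin n → Fin (2*m)) → R)
    (t : Fin n → Fin (2*m)) :
    contract R m n (σ p) (σ q) (fun a => g (a ∘ σ)) t = contract R m n p q g (t ∘ σ) := by
  simp only [contract, set2_comp_perm]

end Contract

section Matrices

variable {R : Type} [CommRing R] {α : Type} [Fintype α] [DecidableEq α]

lemma funMap_eq_toLinAlgEquiv' (M : α → α → R) :
    funMap R α α M = Matrix.toLinAlgEquiv' (Matrix.of M) := rfl

lemma funMap_mul_eq_funMap_mul_iff (M N M' N' : α → α → R) :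
    funMap R α α M * funMap R α α N = funMap R α α M' * funMap R α α N' ↔
      ∀ b c, ∑ a, M b a * N a c = ∑ a, M' b a * N' a c := by
  simp only [funMap_eq_toLinAlgEquiv', ← map_mul, Matrix.toLinAlgEquiv'.injective.eq_iff,
    ← Matrix.ext_iff, Matrix.mul_apply, Matrix.of_apply]

lemma funMap_toMatrix' (F : Module.End R (α → R)) :
    funMap R α α (fun b a => LinearMap.toMatrix' F b a) = F :=
  Matrix.toLin'_toMatrix' F

end Matrices

def leftPos {n : ℕ} (j : Fin (n-1)) : Fin n := ⟨j, by omega⟩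

def rightPos {n : ℕ} (j : Fin (n-1)) : Fin n := ⟨j + 1, by omega⟩

lemma leftPos_ne_rightPos {n : ℕ} (j : Fin (n-1)) : leftPos j ≠ rightPos j :=
  Fin.ne_of_val_ne (Nat.ne_of_lt (Nat.lt_succ_self _))

lemma exists_leftPos_eq_and_rightPos_eq {n : ℕ} {p q : Fin n} (hp : (p:ℕ) = 0)
    (hq : (q:ℕ) = 1) : ∃ j : Fin (n-1), leftPos j = p ∧ rightPos j = q :=
  ⟨⟨0, by have := q.isLt; omega⟩, Fin.ext hp.symm, Fin.ext hq.symm⟩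

/-- The identity saying that the operator with coefficients `c` commutes with `e` acting in
positions `p`, `q`. -/
def ContractionCompatible {R : Type} [CommRing R] {m n : ℕ}
    (c : (Fin n → Fin (2*m)) → (Fin n → Fin (2*m)) → R) (p q : Fin n) : Prop :=
  ∀ u b, ((epsZ m (b p) (b q) : ℤ) : R) * contract R m n p q (fun a => c a u) b =
    ((epsZ m (u p) (u q) : ℤ) : R) * contract R m n p q (c b) u

section Commutation

variable {R : Type} [CommRing R] {m n : ℕ}

lemma funMap_mul_sOp_eq_iff (c : (Fin n → Fin (2*m)) → (Fin n → Fin (2*m)) → R)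
    (j : Fin (n-1)) :
    funMap R _ _ (fun u a => c a u) * sOp R m n j =
        sOp R m n j * funMap R _ _ (fun u a => c a u) ↔
      ∀ a b, c (a ∘ Equiv.swap (leftPos j) (rightPos j))
        (b ∘ Equiv.swap (leftPos j) (rightPos j)) = c a b := by
  set τ := Equiv.swap (leftPos j) (rightPos j)
  have hττ (a : Fin n → Fin (2*m)) : (a ∘ τ) ∘ τ = a := funext fun r => by simp [τ]
  have hsum (b : Fin n → Fin (2*m)) (f : (Fin n → Fin (2*m)) → R) :
      ∑ a, (if b = a ∘ τ then f a else 0) = f (b ∘ τ) := by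
    have hτ (a : Fin n → Fin (2*m)) : b = a ∘ τ ↔ a = b ∘ τ :=
      ⟨fun h => by rw [h, hττ], fun h => by rw [h, hττ]⟩
    simp only [hτ, Finset.sum_ite_eq', Finset.mem_univ, if_true]
  change funMap R _ _ _ * funMap R _ _ (fun a b => if b = a ∘ τ then -1 else 0) =
    funMap R _ _ (fun a b => if b = a ∘ τ then -1 else 0) * funMap R _ _ _ ↔ _
  simp only [funMap_mul_eq_funMap_mul_iff, mul_ite, ite_mul, mul_neg_one, neg_one_mul, mul_zero,
    zero_mul, Finset.sum_ite_eq', Finset.mem_univ, if_true, hsum, neg_inj]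
  constructor
  · intro h a b
    rw [h, hττ]
  · intro h u b
    rw [← h, hττ]

/-- The matrix of `eOp` with `leftPos j`, `rightPos j` replaced by arbitrary positions. -/
def eMat (R : Type) [CommRing R] (m n : ℕ) (p q : Fin n) :
    (Fin n → Fin (2*m)) → (Fin n → Fin (2*m)) → R := fun a b =>
  (if ∀ r, r ≠ p → r ≠ q → b r = a r then 1 else 0) *
    -((epsZ m (a p) (a q) : ℤ) : R) * ((epsZ m (b p) (b q) : ℤ) : R)

lemma funMap_mul_eMat_eq_iff (c : (Fin n → Fin (2*m)) → (Fin n → Fin (2*m)) → R)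
    {p q : Fin n} (hpq : p ≠ q) :
    funMap R _ _ (fun u a => c a u) * funMap R _ _ (eMat R m n p q) =
        funMap R _ _ (eMat R m n p q) * funMap R _ _ (fun u a => c a u) ↔
      ContractionCompatible c p q := by
  have hleft (u b : Fin n → Fin (2*m)) : ∑ a, c a u * eMat R m n p q a b =
      -(((epsZ m (b p) (b q) : ℤ) : R) * contract R m n p q (fun a => c a u) b) := by
    rw [← sum_agree_eq_contract hpq, Finset.mul_sum, ← Finset.sum_neg_distrib]
    refine Finset.sum_congr rfl fun a _ => ?_
    by_cases h : ∀ r, r ≠ p → r ≠ q → a r = b r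
    · rw [eMat, if_pos h, if_pos fun r hp hq => (h r hp hq).symm]
      ring
    · rw [eMat, if_neg h, if_neg fun h' => h fun r hp hq => (h' r hp hq).symm]
      ring
  have hright (u b : Fin n → Fin (2*m)) : ∑ a, eMat R m n p q u a * c b a =
      -(((epsZ m (u p) (u q) : ℤ) : R) * contract R m n p q (c b) u) := by
    rw [← sum_agree_eq_contract hpq, Finset.mul_sum, ← Finset.sum_neg_distrib]
    refine Finset.sum_congr rfl fun a _ => ?_
    rw [eMat]
    split_ifs <;> ring
  simp only [funMap_mul_eq_funMap_mul_iff, hleft, hright, neg_inj]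
  rfl

lemma funMap_mul_eOp_eq_iff (c : (Fin n → Fin (2*m)) → (Fin n → Fin (2*m)) → R)
    (j : Fin (n-1)) :
    funMap R _ _ (fun u a => c a u) * eOp R m n j =
        eOp R m n j * funMap R _ _ (fun u a => c a u) ↔
      ContractionCompatible c (leftPos j) (rightPos j) :=
  funMap_mul_eMat_eq_iff c (leftPos_ne_rightPos j)

end Commutation

lemma exists_perm_apply_eq_and_apply_eq {α : Type} [DecidableEq α] {a b x y : α}
    (hab : a ≠ b) (hxy : x ≠ y) : ∃ σ : Equiv.Perm α, σ a = x ∧ σ b = y := by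
  refine ⟨(Equiv.swap a x).trans (Equiv.swap (Equiv.swap a x b) y), ?_, by simp⟩
  rw [Equiv.trans_apply, Equiv.swap_apply_left, Equiv.swap_apply_of_ne_of_ne _ hxy]
  exact fun h => hab ((Equiv.swap a x).injective ((Equiv.swap_apply_left a x).trans h))

namespace ContractionCompatible

variable {R : Type} [CommRing R] {m n : ℕ}
  {c : (Fin n → Fin (2*m)) → (Fin n → Fin (2*m)) → R} {p q : Fin n}

lemma contract_eq_zero_left (h : ContractionCompatible c p q) (hpq : p ≠ q)
    {u : Fin n → Fin (2*m)} (hu : u p ≠ conjIdx m (u q)) (t : Fin n → Fin (2*m)) :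
    contract R m n p q (c u) t = 0 := by
  have key := h (set2 m n p q (u p) (conjIdx m (u p)) t) u
  rw [epsZ_eq_zero_of_ne_conjIdx (mt eq_conjIdx_comm.1 hu), Int.cast_zero, zero_mul,
    set2_apply_left, set2_apply_right hpq, contract_set2] at key
  rw [← one_mul (contract R m n p q (c u) t), ← epsZ_conjIdx_mul_self R (u p), mul_assoc,
    ← key, mul_zero]

lemma contract_eq_zero_right (h : ContractionCompatible c p q) (hpq : p ≠ q)
    {w : Fin n → Fin (2*m)} (hw : w p ≠ conjIdx m (w q)) (t : Fin n → Fin (2*m)) :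
    contract R m n p q (fun a => c a w) t = 0 := by
  have key := h w (set2 m n p q (w p) (conjIdx m (w p)) t)
  rw [epsZ_eq_zero_of_ne_conjIdx (mt eq_conjIdx_comm.1 hw), Int.cast_zero, zero_mul,
    set2_apply_left, set2_apply_right hpq, contract_set2] at key
  rw [← one_mul (contract R m n p q _ t), ← epsZ_conjIdx_mul_self R (w p), mul_assoc, key,
    mul_zero]

lemma contract_set2_eq (h : ContractionCompatible c p q) (hpq : p ≠ q) {i j : Fin (2*m)}
    (hi : (i:ℕ) < m) (hj : (j:ℕ) < m) (t w : Fin n → Fin (2*m)) :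
    contract R m n p q (c (set2 m n p q i (conjIdx m i) t)) w =
      contract R m n p q (fun a => c a (set2 m n p q j (conjIdx m j) w)) t := by
  have key := h (set2 m n p q j (conjIdx m j) w) (set2 m n p q i (conjIdx m i) t)
  simp only [set2_apply_left, set2_apply_right hpq, epsZ_conjIdx, if_pos hi, if_pos hj,
    contract_set2, Int.cast_one, one_mul] at key
  exact key.symm

lemma comp_perm (h : ContractionCompatible c p q) {σ : Equiv.Perm (Fin n)}
    (hσ : ∀ a b, c (a ∘ σ) (b ∘ σ) = c a b) : ContractionCompatible c (σ p) (σ q) := by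
  intro u b
  have key := h (u ∘ σ) (b ∘ σ)
  simp only [Function.comp_apply, ← contract_comp_perm, hσ] at key
  exact key

lemma of_perm_invariant (h : ContractionCompatible c p q)
    (hσ : ∀ (σ : Equiv.Perm (Fin n)) a b, c (a ∘ σ) (b ∘ σ) = c a b) (hpq : p ≠ q)
    {p' q' : Fin n} (hpq' : p' ≠ q') : ContractionCompatible c p' q' := by
  obtain ⟨σ, rfl, rfl⟩ := exists_perm_apply_eq_and_apply_eq hpq hpq'
  exact h.comp_perm (hσ σ)

end ContractionCompatible

section Converse

variable {R : Type} [CommRing R] {m n : ℕ}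
  {c : (Fin n → Fin (2*m)) → (Fin n → Fin (2*m)) → R} {p q : Fin n}

/-- Swapping the two contracted slots flips both the sign `ε` and, by invariance under the
swap, the sign of the contraction. -/
lemma epsZ_mul_contract_conjIdx (hpq : p ≠ q)
    (hτ : ∀ a b, c (a ∘ Equiv.swap p q) (b ∘ Equiv.swap p q) = c a b)
    (i : Fin (2*m)) (t w : Fin n → Fin (2*m)) :
    ((epsZ m (conjIdx m i) (conjIdx m (conjIdx m i)) : ℤ) : R) *
        contract R m n p q (c (set2 m n p q (conjIdx m i) (conjIdx m (conjIdx m i)) t)) w =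
      ((epsZ m i (conjIdx m i) : ℤ) : R) *
        contract R m n p q (c (set2 m n p q i (conjIdx m i) t)) w := by
  have hc : c (set2 m n p q (conjIdx m i) i t) =
      fun b => c (set2 m n p q i (conjIdx m i) t) (b ∘ Equiv.swap p q) := by
    funext b
    rw [← set2_comp_swap hpq, ← hτ _ (b ∘ Equiv.swap p q)]
    congr 1
    funext r
    simp
  rw [conjIdx_conjIdx, epsZ_antisymm i, hc, contract_comp_swap hpq, Int.cast_neg]
  ring

theorem contractionCompatible_of_contract_eq (hpq : p ≠ q)
    (hτ : ∀ a b, c (a ∘ Equiv.swap p q) (b ∘ Equiv.swap p q) = c a b)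
    (hleft : ∀ u t, u p ≠ conjIdx m (u q) → contract R m n p q (c u) t = 0)
    (hright : ∀ t w, w p ≠ conjIdx m (w q) → contract R m n p q (fun a => c a w) t = 0)
    (hcomm : ∀ i j : Fin (2*m), (i:ℕ) < m → (j:ℕ) < m → ∀ t w,
      contract R m n p q (c (set2 m n p q i (conjIdx m i) t)) w =
        contract R m n p q (fun a => c a (set2 m n p q j (conjIdx m j) w)) t) :
    ContractionCompatible c p q := by
  have hbal (i j : Fin (2*m)) (t w : Fin n → Fin (2*m)) :
      ((epsZ m i (conjIdx m i) : ℤ) : R) *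
          contract R m n p q (c (set2 m n p q i (conjIdx m i) t)) w =
        ((epsZ m j (conjIdx m j) : ℤ) : R) *
          contract R m n p q (fun a => c a (set2 m n p q j (conjIdx m j) w)) t := by
    induction i using forall_of_forall_lt_of_conjIdx with
    | hconj i h => rwa [← epsZ_mul_contract_conjIdx hpq hτ]
    | hlt i hi =>
      induction j using forall_of_forall_lt_of_conjIdx with
      | hconj j h =>
        rwa [← epsZ_mul_contract_conjIdx (c := fun a b => c b a) hpq (fun a b => hτ b a) j w t]
      | hlt j hj => rw [epsZ_conjIdx, epsZ_conjIdx, if_pos hi, if_pos hj, hcomm i j hi hj]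
  intro u b
  by_cases hb : b q = conjIdx m (b p)
  · by_cases hu : u q = conjIdx m (u p)
    · have key := hbal (b p) (u p) b u
      rw [← hb, ← hu, set2_self, set2_self] at key
      have hb2 : ((epsZ m (b p) (b q) : ℤ) : R) * (epsZ m (b p) (b q) : ℤ) = 1 := by
        rw [hb]; exact epsZ_conjIdx_mul_self R _
      have hu2 : ((epsZ m (u p) (u q) : ℤ) : R) * (epsZ m (u p) (u q) : ℤ) = 1 := by
        rw [hu]; exact epsZ_conjIdx_mul_self R _
      set εb : R := ((epsZ m (b p) (b q) : ℤ) : R)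
      set εu : R := ((epsZ m (u p) (u q) : ℤ) : R)
      linear_combination -(εb * εu) * key + εu * contract R m n p q (c b) u * hb2
        - εb * contract R m n p q (fun a => c a u) b * hu2
    · rw [epsZ_eq_zero_of_ne_conjIdx hu, hright b u (mt eq_conjIdx_comm.1 hu)]
      ring
  · rw [epsZ_eq_zero_of_ne_conjIdx hb, hleft b u (mt eq_conjIdx_comm.1 hb)]
    ring

end Converse

lemma comp_perm_invariant_of_adjacent_swaps {α β : Type} {n : ℕ}
    {c : (Fin n → α) → (Fin n → α) → β}
    (h : ∀ j : Fin (n-1), ∀ a b, c (a ∘ Equiv.swap (leftPos j) (rightPos j))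
      (b ∘ Equiv.swap (leftPos j) (rightPos j)) = c a b)
    (σ : Equiv.Perm (Fin n)) (a b : Fin n → α) : c (a ∘ σ) (b ∘ σ) = c a b := by
  obtain _ | n := n
  · rw [Subsingleton.elim σ 1]
    rfl
  induction (Equiv.Perm.mclosure_swap_castSucc_succ n).ge (Submonoid.mem_top σ)
    using Submonoid.closure_induction generalizing a b with
  | mem _ hσ => obtain ⟨j, rfl⟩ := hσ; exact h j a b
  | one => rfl
  | mul σ τ _ _ hσ hτ =>
    rw [Equiv.Perm.coe_mul, ← Function.comp_assoc, ← Function.comp_assoc, hτ, hσ]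

theorem symplectic_schur_algebra_eq_brauer_centralizer_general
    (K : Type) [Field K] (m n : ℕ) :
    {F : Module.End K (Ten K m n) |
      ∃ c : (Fin n → Fin (2*m)) → (Fin n → Fin (2*m)) → K,
        (∀ (σ : Equiv.Perm (Fin n)) a b, c (a ∘ σ) (b ∘ σ) = c a b) ∧
        (∀ (u t : Fin n → Fin (2*m)) (p q : Fin n), (p:ℕ) = 0 → (q:ℕ) = 1 →
          u p ≠ conjIdx m (u q) →
          ∑ k : Fin (2*m), ((epsZ m k (conjIdx m k) : ℤ) : K) *
            c u (set2 m n p q k (conjIdx m k) t) = 0) ∧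
        (∀ (t w : Fin n → Fin (2*m)) (p q : Fin n), (p:ℕ) = 0 → (q:ℕ) = 1 →
          w p ≠ conjIdx m (w q) →
          ∑ k : Fin (2*m), ((epsZ m k (conjIdx m k) : ℤ) : K) *
            c (set2 m n p q k (conjIdx m k) t) w = 0) ∧
        (∀ (i j : Fin (2*m)), (i:ℕ) < m → (j:ℕ) < m →
          ∀ (t w : Fin n → Fin (2*m)) (p q : Fin n), (p:ℕ) = 0 → (q:ℕ) = 1 →
          ∑ k : Fin (2*m), ((epsZ m k (conjIdx m k) : ℤ) : K) *
            (c (set2 m n p q i (conjIdx m i) t) (set2 m n p q k (conjIdx m k) w) -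
             c (set2 m n p q k (conjIdx m k) t) (set2 m n p q j (conjIdx m j) w)) = 0) ∧
        F = funMap K _ _ (fun u a => c a u)} =
    {F : Module.End K (Ten K m n) | ∀ j : Fin (n-1),
      F * sOp K m n j = sOp K m n j * F ∧ F * eOp K m n j = eOp K m n j * F} := by
  ext F
  constructor
  · rintro ⟨c, hσ, hleft, hright, hcomm, rfl⟩ j
    let j₀ : Fin (n-1) := ⟨0, j.pos⟩
    have hcompat₀ := contractionCompatible_of_contract_eq (leftPos_ne_rightPos j₀) (hσ _)
      (fun u t => hleft u t _ _ rfl rfl) (fun t w => hright t w _ _ rfl rfl)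
      (fun i k hi hk t w => (sum_epsZ_mul_sub_eq_zero_iff c i k t w).1
        (hcomm i k hi hk t w _ _ rfl rfl))
    exact ⟨(funMap_mul_sOp_eq_iff c j).2 (hσ _), (funMap_mul_eOp_eq_iff c j).2
      (hcompat₀.of_perm_invariant hσ (leftPos_ne_rightPos j₀) (leftPos_ne_rightPos j))⟩
  · intro hF
    obtain ⟨c, rfl⟩ : ∃ c, F = funMap K _ _ (fun u a => c a u) :=
      ⟨fun a u => LinearMap.toMatrix' F u a, (funMap_toMatrix' F).symm⟩
    have hcompat (j : Fin (n-1)) : ContractionCompatible c (leftPos j) (rightPos j) :=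
      (funMap_mul_eOp_eq_iff c j).1 (hF j).2
    refine ⟨c, comp_perm_invariant_of_adjacent_swaps fun j =>
      (funMap_mul_sOp_eq_iff c j).1 (hF j).1, ?_, ?_, ?_, rfl⟩
    · rintro u t p q hp hq hu
      obtain ⟨j, rfl, rfl⟩ := exists_leftPos_eq_and_rightPos_eq hp hq
      exact (hcompat j).contract_eq_zero_left (leftPos_ne_rightPos j) hu t
    · rintro t w p q hp hq hw
      obtain ⟨j, rfl, rfl⟩ := exists_leftPos_eq_and_rightPos_eq hp hq
      exact (hcompat j).contract_eq_zero_right (leftPos_ne_rightPos j) hw t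
    · rintro i k hi hk t w p q hp hq
      obtain ⟨j, rfl, rfl⟩ := exists_leftPos_eq_and_rightPos_eq hp hq
      exact (sum_epsZ_mul_sub_eq_zero_iff c i k t w).2 <|
        (hcompat j).contract_set2_eq (leftPos_ne_rightPos j) hi hk t w

/-- For any field `K`, the subalgebra `S_K^s(m,n)` of the Schur algebra
`S_K(2m,n)` (realized inside `End_K(V^{⊗n})`; its elements are the operators with
place-permutation-invariant coefficient matrix `c` satisfying the three linear
conditions (2.4)) is exactly `End_{B_n(-2m)}(V^{⊗n})`, the centralizer of the right
action of the Brauer algebra. -/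
theorem symplectic_schur_algebra_eq_brauer_centralizer
    (K : Type) [Field K] (m n : ℕ) (hm : 0 < m) (hn : 0 < n) :
    {F : Module.End K (Ten K m n) |
      ∃ c : (Fin n → Fin (2*m)) → (Fin n → Fin (2*m)) → K,
        (∀ (σ : Equiv.Perm (Fin n)) a b, c (a ∘ σ) (b ∘ σ) = c a b) ∧
        (∀ (u t : Fin n → Fin (2*m)) (p q : Fin n), (p:ℕ) = 0 → (q:ℕ) = 1 →
          u p ≠ conjIdx m (u q) →
          ∑ k : Fin (2*m), ((epsZ m k (conjIdx m k) : ℤ) : K) *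
            c u (set2 m n p q k (conjIdx m k) t) = 0) ∧
        (∀ (t w : Fin n → Fin (2*m)) (p q : Fin n), (p:ℕ) = 0 → (q:ℕ) = 1 →
          w p ≠ conjIdx m (w q) →
          ∑ k : Fin (2*m), ((epsZ m k (conjIdx m k) : ℤ) : K) *
            c (set2 m n p q k (conjIdx m k) t) w = 0) ∧
        (∀ (i j : Fin (2*m)), (i:ℕ) < m → (j:ℕ) < m →
          ∀ (t w : Fin n → Fin (2*m)) (p q : Fin n), (p:ℕ) = 0 → (q:ℕ) = 1 →
          ∑ k : Fin (2*m), ((epsZ m k (conjIdx m k) : ℤ) : K) *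
            (c (set2 m n p q i (conjIdx m i) t) (set2 m n p q k (conjIdx m k) w) -
             c (set2 m n p q k (conjIdx m k) t) (set2 m n p q j (conjIdx m j) w)) = 0) ∧
        F = funMap K _ _ (fun u a => c a u)} =
    {F : Module.End K (Ten K m n) | ∀ j : Fin (n-1),
      F * sOp K m n j = sOp K m n j * F ∧ F * eOp K m n j = eOp K m n j * F} :=
  symplectic_schur_algebra_eq_brauer_centralizer_general K m n

end SpBrauer
end
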